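/- If (A;B;C;D) are base sequences of lengths m, m, n, n, then the four {0,±1}-sequences ((A+B)/2, 0_n; (A−B)/2, 0_n; 0_m, (C+D)/2; 0_m, (C−D)/2), where addition and subtraction of sequences is componentwise, 0_k denotes the sequence of k zeroes, and comma denotes concatenation, are T-sequences of length m+n. -/
import Mathlib


/-- A sequence is modeled as a function `ℤ → ℤ`. -/
abbrev BSeq : Type := ℤ → ℤ

/-- A quadruple of sequences. -/
abbrev SeqQuad : Type := BSeq × BSeq × BSeq × BSeq

/-- A binary (`±1`) sequence of length `n`: supported on `[1, n]`,
with values in `{1, -1}` there, and `0` outside. -/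
def IsBinarySeq (n : ℕ) (a : BSeq) : Prop :=
  (∀ i : ℤ, 1 ≤ i → i ≤ (n : ℤ) → a i = 1 ∨ a i = -1) ∧
  (∀ i : ℤ, i < 1 ∨ (n : ℤ) < i → a i = 0)

/-- The nonperiodic autocorrelation function `N_A(i) = Σ_{j ∈ ℤ} a_j a_{i+j}`. -/
noncomputable def NAC (a : BSeq) (i : ℤ) : ℤ := ∑ᶠ j : ℤ, a j * a (i + j)

/-- `(A; B; C; D)` is a Turyn-type sequence `TT(n)`: binary sequences of lengths
`n, n, n, n-1` with `N_A(i) + N_B(i) + 2N_C(i) + 2N_D(i) = 0` for all `i ≠ 0`. -/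
def IsTT (n : ℕ) (A B C D : BSeq) : Prop :=
  IsBinarySeq n A ∧ IsBinarySeq n B ∧ IsBinarySeq n C ∧ IsBinarySeq (n - 1) D ∧
  ∀ i : ℤ, i ≠ 0 → NAC A i + NAC B i + 2 * NAC C i + 2 * NAC D i = 0

/-- Concatenation of a sequence of length `n` with another sequence. -/
def concatSeq (n : ℕ) (a b : BSeq) : BSeq := fun k => if k ≤ (n : ℤ) then a k else b (k - n)

/-- Base sequences of lengths `m, m, n, n`. -/
def IsBaseSeq (m n : ℕ) (A B C D : BSeq) : Prop :=
  IsBinarySeq m A ∧ IsBinarySeq m B ∧ IsBinarySeq n C ∧ IsBinarySeq n D ∧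
  ∀ i : ℤ, i ≠ 0 → NAC A i + NAC B i + NAC C i + NAC D i = 0

/-- A `{0, ±1}`-sequence of length `n`. -/
def IsZPMSeq (n : ℕ) (a : BSeq) : Prop :=
  (∀ i : ℤ, 1 ≤ i → i ≤ (n : ℤ) → a i = 0 ∨ a i = 1 ∨ a i = -1) ∧
  (∀ i : ℤ, i < 1 ∨ (n : ℤ) < i → a i = 0)

/-- `T`-sequences of length `n`: four `{0, ±1}`-sequences such that in each
position exactly one entry is nonzero and the sum of the nonperiodic
autocorrelation functions vanishes for all `s ≥ 1`. -/
def IsTSeq (n : ℕ) (E F G H : BSeq) : Prop :=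
  IsZPMSeq n E ∧ IsZPMSeq n F ∧ IsZPMSeq n G ∧ IsZPMSeq n H ∧
  (∀ i : ℤ, 1 ≤ i → i ≤ (n : ℤ) →
    ((E i ≠ 0 ∧ F i = 0 ∧ G i = 0 ∧ H i = 0) ∨
     (E i = 0 ∧ F i ≠ 0 ∧ G i = 0 ∧ H i = 0) ∨
     (E i = 0 ∧ F i = 0 ∧ G i ≠ 0 ∧ H i = 0) ∨
     (E i = 0 ∧ F i = 0 ∧ G i = 0 ∧ H i ≠ 0))) ∧
  (∀ s : ℤ, 1 ≤ s → NAC E s + NAC F s + NAC G s + NAC H s = 0)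

lemma NAC_eq_sum (a : BSeq) (N : ℕ) (h0 : ∀ i : ℤ, i < 1 ∨ (N : ℤ) < i → a i = 0) (s : ℤ) :
    NAC a s = ∑ j ∈ Finset.Icc (1 : ℤ) (N : ℤ), a j * a (s + j) := by
  apply finsum_eq_finset_sum_of_support_subset
  intro j hj
  simp only [Function.mem_support] at hj
  simp only [Finset.coe_Icc, Set.mem_Icc]
  by_contra hc
  push_neg at hc
  rcases le_or_gt 1 j with h1 | h1
  · exact hj (by rw [h0 j (Or.inr (hc h1))]; ring)
  · exact hj (by rw [h0 j (Or.inl h1)]; ring)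

lemma NAC_shift (a : BSeq) (c s : ℤ) : NAC (fun k => a (k - c)) s = NAC a s := by
  unfold NAC
  calc (∑ᶠ j : ℤ, a (j - c) * a (s + j - c))
      = ∑ᶠ j : ℤ, a ((Equiv.subRight c) j) * a (s + (Equiv.subRight c) j) := by
        apply finsum_congr; intro j
        simp only [Equiv.subRight_apply]
        rw [show s + j - c = s + (j - c) by ring]
    _ = ∑ᶠ j : ℤ, a j * a (s + j) := finsum_comp_equiv (Equiv.subRight c) (f := fun j => a j * a (s + j))

/-- Base sequences of lengths `m, m, n, n` yield `T`-sequences of length `m + n`: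
`((A+B)/2, 0_n; (A-B)/2, 0_n; 0_m, (C+D)/2; 0_m, (C-D)/2)`. -/
theorem base_sequences_give_T_sequences (m n : ℕ) (A B C D : BSeq)
    (h : IsBaseSeq m n A B C D) :
    IsTSeq (m + n)
      (concatSeq m (fun i => (A i + B i) / 2) (fun _ => 0))
      (concatSeq m (fun i => (A i - B i) / 2) (fun _ => 0))
      (concatSeq m (fun _ => 0) (fun i => (C i + D i) / 2))
      (concatSeq m (fun _ => 0) (fun i => (C i - D i) / 2)) := by
  obtain ⟨⟨hA1, hA0⟩, ⟨hB1, hB0⟩, ⟨hC1, hC0⟩, ⟨hD1, hD0⟩, hcorr⟩ := h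
  set E : BSeq := concatSeq m (fun i => (A i + B i) / 2) (fun _ => 0) with hE
  set F : BSeq := concatSeq m (fun i => (A i - B i) / 2) (fun _ => 0) with hF
  set G : BSeq := concatSeq m (fun _ => 0) (fun i => (C i + D i) / 2) with hG
  set H : BSeq := concatSeq m (fun _ => 0) (fun i => (C i - D i) / 2) with hH
  have h2E : ∀ j : ℤ, 2 * E j = A j + B j := by
    intro j
    simp only [hE, concatSeq]
    split_ifs with hjm
    · rcases lt_or_ge j 1 with hj | hj
      · rw [hA0 j (Or.inl hj), hB0 j (Or.inl hj)]; norm_num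
      · rcases hA1 j hj hjm with h1 | h1 <;> rcases hB1 j hj hjm with h2 | h2 <;>
          rw [h1, h2] <;> norm_num
    · push_neg at hjm
      rw [hA0 j (Or.inr hjm), hB0 j (Or.inr hjm)]; norm_num
  have h2F : ∀ j : ℤ, 2 * F j = A j - B j := by
    intro j
    simp only [hF, concatSeq]
    split_ifs with hjm
    · rcases lt_or_ge j 1 with hj | hj
      · rw [hA0 j (Or.inl hj), hB0 j (Or.inl hj)]; norm_num
      · rcases hA1 j hj hjm with h1 | h1 <;> rcases hB1 j hj hjm with h2 | h2 <;>
          rw [h1, h2] <;> norm_num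
    · push_neg at hjm
      rw [hA0 j (Or.inr hjm), hB0 j (Or.inr hjm)]; norm_num
  have h2G : ∀ j : ℤ, 2 * G j = C (j - m) + D (j - m) := by
    intro j
    simp only [hG, concatSeq]
    split_ifs with hjm
    · rw [hC0 (j - m) (Or.inl (by omega)), hD0 (j - m) (Or.inl (by omega))]; norm_num
    · push_neg at hjm
      rcases le_or_gt (j - m) (n : ℤ) with hj | hj
      · rcases hC1 (j - m) (by omega) hj with h1 | h1 <;>
          rcases hD1 (j - m) (by omega) hj with h2 | h2 <;> rw [h1, h2] <;> norm_num
      · rw [hC0 (j - m) (Or.inr hj), hD0 (j - m) (Or.inr hj)]; norm_num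
  have h2H : ∀ j : ℤ, 2 * H j = C (j - m) - D (j - m) := by
    intro j
    simp only [hH, concatSeq]
    split_ifs with hjm
    · rw [hC0 (j - m) (Or.inl (by omega)), hD0 (j - m) (Or.inl (by omega))]; norm_num
    · push_neg at hjm
      rcases le_or_gt (j - m) (n : ℤ) with hj | hj
      · rcases hC1 (j - m) (by omega) hj with h1 | h1 <;>
          rcases hD1 (j - m) (by omega) hj with h2 | h2 <;> rw [h1, h2] <;> norm_num
      · rw [hC0 (j - m) (Or.inr hj), hD0 (j - m) (Or.inr hj)]; norm_num
  have hE0 : ∀ i : ℤ, i < 1 ∨ ((m + n : ℕ) : ℤ) < i → E i = 0 := by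
    intro i hi
    have h2 := h2E i
    have ha : A i = 0 := hA0 i (by push_cast at hi; omega)
    have hb : B i = 0 := hB0 i (by push_cast at hi; omega)
    omega
  have hF0 : ∀ i : ℤ, i < 1 ∨ ((m + n : ℕ) : ℤ) < i → F i = 0 := by
    intro i hi
    have h2 := h2F i
    have ha : A i = 0 := hA0 i (by push_cast at hi; omega)
    have hb : B i = 0 := hB0 i (by push_cast at hi; omega)
    omega
  have hG0 : ∀ i : ℤ, i < 1 ∨ ((m + n : ℕ) : ℤ) < i → G i = 0 := by
    intro i hi
    have h2 := h2G i
    have ha : C (i - m) = 0 := hC0 (i - m) (by push_cast at hi; omega)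
    have hb : D (i - m) = 0 := hD0 (i - m) (by push_cast at hi; omega)
    omega
  have hH0 : ∀ i : ℤ, i < 1 ∨ ((m + n : ℕ) : ℤ) < i → H i = 0 := by
    intro i hi
    have h2 := h2H i
    have ha : C (i - m) = 0 := hC0 (i - m) (by push_cast at hi; omega)
    have hb : D (i - m) = 0 := hD0 (i - m) (by push_cast at hi; omega)
    omega
  have hsum : ∀ s : ℤ, 4 * (NAC E s + NAC F s + NAC G s + NAC H s)
      = 2 * (NAC A s + NAC B s + NAC C s + NAC D s) := by
    intro s
    have hEs := NAC_eq_sum E (m + n) hE0 s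
    have hFs := NAC_eq_sum F (m + n) hF0 s
    have hGs := NAC_eq_sum G (m + n) hG0 s
    have hHs := NAC_eq_sum H (m + n) hH0 s
    have hAs : NAC A s = ∑ j ∈ Finset.Icc (1 : ℤ) ((m + n : ℕ) : ℤ), A j * A (s + j) :=
      NAC_eq_sum A (m + n) (fun i hi => hA0 i (by push_cast at hi ⊢; omega)) s
    have hBs : NAC B s = ∑ j ∈ Finset.Icc (1 : ℤ) ((m + n : ℕ) : ℤ), B j * B (s + j) :=
      NAC_eq_sum B (m + n) (fun i hi => hB0 i (by push_cast at hi ⊢; omega)) s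
    have hCs : NAC C s = ∑ j ∈ Finset.Icc (1 : ℤ) ((m + n : ℕ) : ℤ),
        C (j - m) * C (s + j - m) := by
      rw [← NAC_shift C m s]
      exact NAC_eq_sum (fun k => C (k - m)) (m + n)
        (fun i hi => hC0 (i - m) (by push_cast at hi ⊢; omega)) s
    have hDs : NAC D s = ∑ j ∈ Finset.Icc (1 : ℤ) ((m + n : ℕ) : ℤ),
        D (j - m) * D (s + j - m) := by
      rw [← NAC_shift D m s]
      exact NAC_eq_sum (fun k => D (k - m)) (m + n)
        (fun i hi => hD0 (i - m) (by push_cast at hi ⊢; omega)) s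
    rw [hEs, hFs, hGs, hHs, hAs, hBs, hCs, hDs, ← Finset.sum_add_distrib,
      ← Finset.sum_add_distrib, ← Finset.sum_add_distrib, ← Finset.sum_add_distrib,
      ← Finset.sum_add_distrib, ← Finset.sum_add_distrib, Finset.mul_sum, Finset.mul_sum]
    apply Finset.sum_congr rfl
    intro j _
    have e1 := h2E j; have e2 := h2E (s + j)
    have f1 := h2F j; have f2 := h2F (s + j)
    have g1 := h2G j; have g2 := h2G (s + j)
    have k1 := h2H j; have k2 := h2H (s + j)
    rw [show s + j - (m : ℤ) = s + j - m by ring] at g2 k2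
    linear_combination (2 * E j) * e2 + (A (s + j) + B (s + j)) * e1 +
      (2 * F j) * f2 + (A (s + j) - B (s + j)) * f1 +
      (2 * G j) * g2 + (C (s + j - m) + D (s + j - m)) * g1 +
      (2 * H j) * k2 + (C (s + j - m) - D (s + j - m)) * k1
  refine ⟨⟨?_, hE0⟩, ⟨?_, hF0⟩, ⟨?_, hG0⟩, ⟨?_, hH0⟩, ?_, ?_⟩
  · intro i hi1 hi2
    have h2 := h2E i
    rcases le_or_gt i (m : ℤ) with him | him
    · rcases hA1 i hi1 him with h1 | h1 <;> rcases hB1 i hi1 him with hb | hb <;> omega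
    · have ha : A i = 0 := hA0 i (Or.inr him)
      have hb : B i = 0 := hB0 i (Or.inr him)
      omega
  · intro i hi1 hi2
    have h2 := h2F i
    rcases le_or_gt i (m : ℤ) with him | him
    · rcases hA1 i hi1 him with h1 | h1 <;> rcases hB1 i hi1 him with hb | hb <;> omega
    · have ha : A i = 0 := hA0 i (Or.inr him)
      have hb : B i = 0 := hB0 i (Or.inr him)
      omega
  · intro i hi1 hi2
    have h2 := h2G i
    rcases le_or_gt i (m : ℤ) with him | him
    · have hc : C (i - m) = 0 := hC0 (i - m) (Or.inl (by omega))
      have hd : D (i - m) = 0 := hD0 (i - m) (Or.inl (by omega))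
      omega
    · have hin : i - m ≤ (n : ℤ) := by push_cast at hi2; omega
      rcases hC1 (i - m) (by omega) hin with h1 | h1 <;>
        rcases hD1 (i - m) (by omega) hin with hb | hb <;> omega
  · intro i hi1 hi2
    have h2 := h2H i
    rcases le_or_gt i (m : ℤ) with him | him
    · have hc : C (i - m) = 0 := hC0 (i - m) (Or.inl (by omega))
      have hd : D (i - m) = 0 := hD0 (i - m) (Or.inl (by omega))
      omega
    · have hin : i - m ≤ (n : ℤ) := by push_cast at hi2; omega
      rcases hC1 (i - m) (by omega) hin with h1 | h1 <;>
        rcases hD1 (i - m) (by omega) hin with hb | hb <;> omega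
  · intro i hi1 hi2
    have he := h2E i; have hf := h2F i; have hg := h2G i; have hh := h2H i
    rcases le_or_gt i (m : ℤ) with him | him
    · have hc : C (i - m) = 0 := hC0 (i - m) (Or.inl (by omega))
      have hd : D (i - m) = 0 := hD0 (i - m) (Or.inl (by omega))
      rcases hA1 i hi1 him with h1 | h1 <;> rcases hB1 i hi1 him with hb | hb <;> omega
    · have ha : A i = 0 := hA0 i (Or.inr him)
      have hb : B i = 0 := hB0 i (Or.inr him)
      have hin : i - m ≤ (n : ℤ) := by push_cast at hi2; omega
      rcases hC1 (i - m) (by omega) hin with h1 | h1 <;>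
        rcases hD1 (i - m) (by omega) hin with hd | hd <;> omega
  · intro s hs
    have h1 := hsum s
    have h2 := hcorr s (by omega)
    linarith
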